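/- arXiv:0709.1141 — 3 statements merged into one kernel-verified Lean document; each statement's English description precedes it below -/
import Mathlib

section
/- Proposition 1 (explicit rational solution W₁): Define the vectors L₁ = (1/10)(3z₁−7z₂)(z₁−z₂)³·(1, 1, −2), L₂ = (1/5)(3z₁−7z₂)(z₁−z₂)²·(0, 1, −1), L₃ = (1/10)(7z₁−3z₂)(z₁−z₂)³·(1, −2, 1), L₄ = (1/5)(7z₁−3z₂)(z₁−z₂)²·(0, 1, −1), G₋₂ = (2, −1, −1), G₋₁ = (−2(z₁+z₂), 2z₂, 2z₁), G₀ = (−z₁²+4z₁z₂−z₂², z₁(z₁−2z₂), z₂(z₂−2z₁)) in ℂ³, and set W₁(z) = L₁/(z−z₁)² + L₂/(z−z₁) + L₃/(z−z₂)² + L₄/(z−z₂) + z²·G₋₂ + z·G₋₁ + G₀. Then for every z ∈ ℂ with z ≠ z₁ and z ≠ z₂, W₁ is differentiable at z and W₁′(z) = −2·A(z)·W₁(z). -/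
open Matrix

noncomputable def P1 : Matrix (Fin 3) (Fin 3) ℂ := !![0,1,0; 1,0,0; 0,0,1]
noncomputable def P2 : Matrix (Fin 3) (Fin 3) ℂ := !![0,0,1; 0,1,0; 1,0,0]

/-- The KZ coefficient matrix A(z) = P₁/(z−z₁) + P₂/(z−z₂). -/
noncomputable def A (z₁ z₂ z : ℂ) : Matrix (Fin 3) (Fin 3) ℂ :=
  (z - z₁)⁻¹ • P1 + (z - z₂)⁻¹ • P2

noncomputable def L1 (z₁ z₂ : ℂ) : Fin 3 → ℂ :=
  ((1 : ℂ)/10 * (3*z₁ - 7*z₂) * (z₁ - z₂)^3) • ![1, 1, -2]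
noncomputable def L2 (z₁ z₂ : ℂ) : Fin 3 → ℂ :=
  ((1 : ℂ)/5 * (3*z₁ - 7*z₂) * (z₁ - z₂)^2) • ![0, 1, -1]
noncomputable def L3 (z₁ z₂ : ℂ) : Fin 3 → ℂ :=
  ((1 : ℂ)/10 * (7*z₁ - 3*z₂) * (z₁ - z₂)^3) • ![1, -2, 1]
noncomputable def L4 (z₁ z₂ : ℂ) : Fin 3 → ℂ :=
  ((1 : ℂ)/5 * (7*z₁ - 3*z₂) * (z₁ - z₂)^2) • ![0, 1, -1]

noncomputable def Gm2 : Fin 3 → ℂ := ![2, -1, -1]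
noncomputable def Gm1 (z₁ z₂ : ℂ) : Fin 3 → ℂ := ![-2*(z₁ + z₂), 2*z₂, 2*z₁]
noncomputable def G0 (z₁ z₂ : ℂ) : Fin 3 → ℂ :=
  ![-z₁^2 + 4*z₁*z₂ - z₂^2, z₁*(z₁ - 2*z₂), z₂*(z₂ - 2*z₁)]

/-- The first rational solution W₁. -/
noncomputable def W1 (z₁ z₂ z : ℂ) : Fin 3 → ℂ :=
  ((z - z₁)^2)⁻¹ • L1 z₁ z₂ + (z - z₁)⁻¹ • L2 z₁ z₂ +
  ((z - z₂)^2)⁻¹ • L3 z₁ z₂ + (z - z₂)⁻¹ • L4 z₁ z₂ +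
  z^2 • Gm2 + z • Gm1 z₁ z₂ + G0 z₁ z₂

/-! `W1` is the sum of polar parts of order two at `z₁` and `z₂` and a quadratic polynomial, so
it can be differentiated term by term; after clearing the denominators `(z - z₁)³ (z - z₂)³`,
each component of the KZ equation becomes a polynomial identity in `z, z₁, z₂`. -/

section Derivatives

variable {E : Type*} [NormedAddCommGroup E] [NormedSpace ℂ E]

theorem hasDerivAt_inv_sub_sq_smul_add_inv_sub_smul {a z : ℂ} (u w : E) (hz : z ≠ a) :
    HasDerivAt (fun z => ((z - a) ^ 2)⁻¹ • u + (z - a)⁻¹ • w)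
      ((-2 / (z - a) ^ 3) • u + (-1 / (z - a) ^ 2) • w) z := by
  have hza : z - a ≠ 0 := sub_ne_zero.mpr hz
  have hd : HasDerivAt (fun z => z - a) 1 z := (hasDerivAt_id z).sub_const a
  refine ((((hd.fun_pow 2).fun_inv (pow_ne_zero 2 hza)).smul_const u).add
    ((hd.fun_inv hza).smul_const w)).congr_deriv ?_
  congr 2
  field_simp
  norm_num [mul_comm]

theorem hasDerivAt_sq_smul_add_smul_add_const (a b c : E) (z : ℂ) :
    HasDerivAt (fun z : ℂ => z ^ 2 • a + z • b + c) ((2 * z) • a + b) z := by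
  refine ((((hasDerivAt_pow 2 z).smul_const a).add ((hasDerivAt_id z).smul_const b)).add_const
    c).congr_deriv ?_
  norm_num

end Derivatives

theorem W1_eq_polarParts_add_quadratic (z₁ z₂ : ℂ) : W1 z₁ z₂ = fun z =>
    (((z - z₁) ^ 2)⁻¹ • L1 z₁ z₂ + (z - z₁)⁻¹ • L2 z₁ z₂) +
    (((z - z₂) ^ 2)⁻¹ • L3 z₁ z₂ + (z - z₂)⁻¹ • L4 z₁ z₂) +
    (z ^ 2 • Gm2 + z • Gm1 z₁ z₂ + G0 z₁ z₂) := by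
  funext z
  simp only [W1]
  abel

theorem hasDerivAt_W1 {z₁ z₂ z : ℂ} (h₁ : z ≠ z₁) (h₂ : z ≠ z₂) :
    HasDerivAt (W1 z₁ z₂)
      (((-2 / (z - z₁) ^ 3) • L1 z₁ z₂ + (-1 / (z - z₁) ^ 2) • L2 z₁ z₂) +
        ((-2 / (z - z₂) ^ 3) • L3 z₁ z₂ + (-1 / (z - z₂) ^ 2) • L4 z₁ z₂) +
        ((2 * z) • Gm2 + Gm1 z₁ z₂)) z := by
  rw [W1_eq_polarParts_add_quadratic]
  exact ((hasDerivAt_inv_sub_sq_smul_add_inv_sub_smul _ _ h₁).add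
    (hasDerivAt_inv_sub_sq_smul_add_inv_sub_smul _ _ h₂)).add
    (hasDerivAt_sq_smul_add_smul_add_const _ _ _ z)

theorem neg_two_smul_A_mulVec_W1 {z₁ z₂ z : ℂ} (h₁ : z ≠ z₁) (h₂ : z ≠ z₂) :
    (-2 : ℂ) • (A z₁ z₂ z *ᵥ W1 z₁ z₂ z) =
      ((-2 / (z - z₁) ^ 3) • L1 z₁ z₂ + (-1 / (z - z₁) ^ 2) • L2 z₁ z₂) +
        ((-2 / (z - z₂) ^ 3) • L3 z₁ z₂ + (-1 / (z - z₂) ^ 2) • L4 z₁ z₂) +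
        ((2 * z) • Gm2 + Gm1 z₁ z₂) := by
  have hz₁ : z - z₁ ≠ 0 := sub_ne_zero.mpr h₁
  have hz₂ : z - z₂ ≠ 0 := sub_ne_zero.mpr h₂
  ext i
  fin_cases i <;> simp [W1, A, P1, P2, L1, L2, L3, L4, Gm2, Gm1, G0] <;> field_simp <;> ring

theorem proposition1_general (z₁ z₂ : ℂ) :
    ∀ z : ℂ, z ≠ z₁ → z ≠ z₂ →
      HasDerivAt (W1 z₁ z₂) ((-2 : ℂ) • (A z₁ z₂ z *ᵥ W1 z₁ z₂ z)) z := by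
  intro z h₁ h₂
  rw [neg_two_smul_A_mulVec_W1 h₁ h₂]
  exact hasDerivAt_W1 h₁ h₂

theorem proposition1 (z₁ z₂ : ℂ) (hz : z₁ ≠ z₂) :
    ∀ z : ℂ, z ≠ z₁ → z ≠ z₂ →
      HasDerivAt (W1 z₁ z₂) ((-2 : ℂ) • (A z₁ z₂ z *ᵥ W1 z₁ z₂ z)) z :=
  proposition1_general z₁ z₂
end

section
/- Proposition 2 (existence of a second pure-pole rational solution W₂): There exist vectors M₁, M₂, M₃, M₄ ∈ ℂ³ satisfying M₂ + M₄ = 0 and M₁ + z₁·M₂ + M₃ + z₂·M₄ = (0, 1, −1), such that the function W₂(z) = M₁/(z−z₁)² + M₂/(z−z₁) + M₃/(z−z₂)² + M₄/(z−z₂) satisfies W₂′(z) = −2·A(z)·W₂(z) for every z ∈ ℂ with z ≠ z₁ and z ≠ z₂. -/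
open Matrix

/-- A pure-pole rational function with double poles at z₁ and z₂. -/
noncomputable def polePart (z₁ z₂ : ℂ) (M₁ M₂ M₃ M₄ : Fin 3 → ℂ) (z : ℂ) : Fin 3 → ℂ :=
  ((z - z₁)^2)⁻¹ • M₁ + (z - z₁)⁻¹ • M₂ + ((z - z₂)^2)⁻¹ • M₃ + (z - z₂)⁻¹ • M₄


/-! Write u = (z - z₁)⁻¹ and v = (z - z₂)⁻¹. Away from the poles, u v = (u - v) / (z₁ - z₂), so
`A(z)` applied to the ansatz is again a combination of u³, v³, u², v² and u - v. Taking
M₂ = N / (z₁ - z₂) = -M₄, matching these coefficients against the derivative of the ansatz turns the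
KZ equation into linear conditions on M₁, N, M₃ that do not involve z₁, z₂, and the normalization
becomes M₁ + M₃ + N = (0, 1, -1). The vectors M₁ = (3, 3, 0)/5, N = -(4, 2, 6)/5, M₃ = (1, 4, 1)/5
satisfy all of them. -/

lemma hasDerivAt_inv_sub_pow {𝕜 : Type*} [NontriviallyNormedField 𝕜] {c z : 𝕜} (n : ℕ)
    (h : z ≠ c) :
    HasDerivAt (fun w => ((w - c) ^ n)⁻¹) (-(n * (z - c)⁻¹ ^ (n + 1))) z := by
  have hc : z - c ≠ 0 := sub_ne_zero.mpr h
  refine ((((hasDerivAt_id' z).sub_const c).fun_pow n).fun_inv (pow_ne_zero n hc)).congr_deriv ?_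
  rcases n with _ | n
  · simp
  · rw [Nat.add_sub_cancel, inv_pow]
    field_simp
    ring

lemma hasDerivAt_polePart {z₁ z₂ z : ℂ} {M₁ M₂ M₃ M₄ : Fin 3 → ℂ} (h₁ : z ≠ z₁) (h₂ : z ≠ z₂) :
    HasDerivAt (polePart z₁ z₂ M₁ M₂ M₃ M₄)
      (-((2 * (z - z₁)⁻¹ ^ 3) • M₁ + (z - z₁)⁻¹ ^ 2 • M₂ +
        (2 * (z - z₂)⁻¹ ^ 3) • M₃ + (z - z₂)⁻¹ ^ 2 • M₄)) z := by
  have d₁ := hasDerivAt_inv_sub_pow 1 h₁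
  have d₂ := hasDerivAt_inv_sub_pow 1 h₂
  simp only [pow_one] at d₁ d₂
  refine ((((hasDerivAt_inv_sub_pow 2 h₁).smul_const M₁).fun_add
    (d₁.smul_const M₂)).fun_add ((hasDerivAt_inv_sub_pow 2 h₂).smul_const M₃)).fun_add
    (d₂.smul_const M₄) |>.congr_deriv ?_
  push_cast
  module

lemma mulVec_polePart {z₁ z₂ z : ℂ} (hz : z₁ ≠ z₂) (h₁ : z ≠ z₁) (h₂ : z ≠ z₂)
    (Q₁ Q₂ : Matrix (Fin 3) (Fin 3) ℂ) (M₁ M₂ M₃ M₄ : Fin 3 → ℂ) :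
    ((z - z₁)⁻¹ • Q₁ + (z - z₂)⁻¹ • Q₂) *ᵥ polePart z₁ z₂ M₁ M₂ M₃ M₄ z =
      (z - z₁)⁻¹ ^ 3 • Q₁ *ᵥ M₁ + (z - z₂)⁻¹ ^ 3 • Q₂ *ᵥ M₃
      + (z - z₁)⁻¹ ^ 2 • (Q₁ *ᵥ M₂ + (z₁ - z₂)⁻¹ • Q₂ *ᵥ M₁)
      + (z - z₂)⁻¹ ^ 2 • (Q₂ *ᵥ M₄ - (z₁ - z₂)⁻¹ • Q₁ *ᵥ M₃)
      + ((z - z₁)⁻¹ - (z - z₂)⁻¹) • ((z₁ - z₂)⁻¹ • (Q₁ *ᵥ M₄ + Q₂ *ᵥ M₂)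
          + (z₁ - z₂)⁻¹ ^ 2 • (Q₁ *ᵥ M₃ - Q₂ *ᵥ M₁)) := by
  have huv : (z - z₁)⁻¹ * (z - z₂)⁻¹ = (z₁ - z₂)⁻¹ * ((z - z₁)⁻¹ - (z - z₂)⁻¹) := by
    field_simp [sub_ne_zero.mpr hz, sub_ne_zero.mpr h₁, sub_ne_zero.mpr h₂]
    ring
  simp only [polePart, ← inv_pow, add_mulVec, smul_mulVec, mulVec_add, mulVec_smul]
  set u := (z - z₁)⁻¹
  set v := (z - z₂)⁻¹
  set c := (z₁ - z₂)⁻¹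
  linear_combination (norm := module)
    huv • ((v + c) • Q₁ *ᵥ M₃ + Q₁ *ᵥ M₄ + (u - c) • Q₂ *ᵥ M₁ + Q₂ *ᵥ M₂)

lemma hasDerivAt_polePart_of_coeffs {Q₁ Q₂ : Matrix (Fin 3) (Fin 3) ℂ} {M₁ N M₃ : Fin 3 → ℂ}
    (h₁ : Q₁ *ᵥ M₁ = M₁) (h₃ : Q₂ *ᵥ M₃ = M₃) (hN₁ : N = 2 • (Q₁ *ᵥ N + Q₂ *ᵥ M₁))
    (hN₂ : N = 2 • (Q₂ *ᵥ N + Q₁ *ᵥ M₃)) (hres : Q₁ *ᵥ (M₃ - N) = Q₂ *ᵥ (M₁ - N))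
    {z₁ z₂ z : ℂ} (hz : z₁ ≠ z₂) (hz₁ : z ≠ z₁) (hz₂ : z ≠ z₂) :
    HasDerivAt (polePart z₁ z₂ M₁ ((z₁ - z₂)⁻¹ • N) M₃ (-(z₁ - z₂)⁻¹ • N))
      ((-2 : ℂ) • (((z - z₁)⁻¹ • Q₁ + (z - z₂)⁻¹ • Q₂) *ᵥ
        polePart z₁ z₂ M₁ ((z₁ - z₂)⁻¹ • N) M₃ (-(z₁ - z₂)⁻¹ • N) z)) z := by
  rw [mulVec_polePart hz hz₁ hz₂]
  refine (hasDerivAt_polePart hz₁ hz₂).congr_deriv ?_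
  simp only [mulVec_sub] at hres
  simp only [mulVec_smul, h₁, h₃]
  set u := (z - z₁)⁻¹
  set v := (z - z₂)⁻¹
  set c := (z₁ - z₂)⁻¹
  linear_combination (norm := module) (-(u ^ 2 * c)) • hN₁ + (v ^ 2 * c) • hN₂
    + (2 * (u - v) * c ^ 2) • hres

lemma P1_mulVec (v : Fin 3 → ℂ) : P1 *ᵥ v = ![v 1, v 0, v 2] := by
  ext i; fin_cases i <;> simp [P1, mulVec, dotProduct, Fin.sum_univ_three]

lemma P2_mulVec (v : Fin 3 → ℂ) : P2 *ᵥ v = ![v 2, v 1, v 0] := by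
  ext i; fin_cases i <;> simp [P2, mulVec, dotProduct, Fin.sum_univ_three]

theorem proposition2 (z₁ z₂ : ℂ) (hz : z₁ ≠ z₂) :
    ∃ M₁ M₂ M₃ M₄ : Fin 3 → ℂ,
      M₂ + M₄ = 0 ∧
      M₁ + z₁ • M₂ + M₃ + z₂ • M₄ = ![0, 1, -1] ∧
      ∀ z : ℂ, z ≠ z₁ → z ≠ z₂ →
        HasDerivAt (polePart z₁ z₂ M₁ M₂ M₃ M₄)
          ((-2 : ℂ) • (A z₁ z₂ z *ᵥ polePart z₁ z₂ M₁ M₂ M₃ M₄ z)) z := by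
  set M₁ : Fin 3 → ℂ := ![3/5, 3/5, 0]
  set N : Fin 3 → ℂ := ![-4/5, -2/5, -6/5]
  set M₃ : Fin 3 → ℂ := ![1/5, 4/5, 1/5]
  have hsum : M₁ + M₃ + N = ![0, 1, -1] := by norm_num [M₁, M₃, N]
  have hd : (z₁ - z₂) * (z₁ - z₂)⁻¹ = 1 := mul_inv_cancel₀ (sub_ne_zero.mpr hz)
  refine ⟨M₁, (z₁ - z₂)⁻¹ • N, M₃, -(z₁ - z₂)⁻¹ • N, by module, ?_, fun z hz₁ hz₂ => ?_⟩
  · linear_combination (norm := module) hd • N + hsum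
  · refine hasDerivAt_polePart_of_coeffs ?_ ?_ ?_ ?_ ?_ hz hz₁ hz₂ <;>
      norm_num [P1_mulVec, P2_mulVec, M₁, M₃, N, cons_val_two]
end

section
/- Linear independence of the three rational solutions: Let W₁, W₂, W₃ be as in Theorem 1 (W₁ and W₃ given explicitly, and W₂ any KZ solution of the pure-pole form M₁/(z−z₁)² + M₂/(z−z₁) + M₃/(z−z₂)² + M₄/(z−z₂) with M₂ + M₄ = 0 and M₁ + z₁M₂ + M₃ + z₂M₄ = (0,1,−1)). Then W₁, W₂, W₃ are linearly independent over ℂ as functions on ℂ ∖ {z₁, z₂}: if α₁·W₁(z) + α₂·W₂(z) + α₃·W₃(z) = 0 for all z ∈ ℂ ∖ {z₁, z₂}, then α₁ = α₂ = α₃ = 0. -/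
/-!
At infinity `W₁` grows like `z² • Gm2`, while `W₂` and `W₃` tend to `0`; dividing the relation
by `z²` forces `α₁ = 0`. Because `M₂ + M₄ = 0`, the pole part `W₂` decays like
`(M₁ + z₁ • M₂ + M₃ + z₂ • M₄) / z² = (0, 1, -1) / z²`, whereas `W₃ = ((z - z₁) (z - z₂))⁻² • (1, 1, 1)`
decays like `z⁻⁴`; multiplying by `z²` forces `α₂ = 0`. Finally `W₃` vanishes nowhere, so `α₃ = 0`.
-/

open Matrix

/-- The third rational solution W₃. -/
noncomputable def W3 (z₁ z₂ z : ℂ) : Fin 3 → ℂ :=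
  (((z₁ - z₂)^2 * (z - z₁)^2)⁻¹ - 2 * ((z₁ - z₂)^3 * (z - z₁))⁻¹ +
   ((z₁ - z₂)^2 * (z - z₂)^2)⁻¹ + 2 * ((z₁ - z₂)^3 * (z - z₂))⁻¹) •
    (![1, 1, 1] : Fin 3 → ℂ)

open Filter Topology Bornology

theorem eq_zero_of_tendsto_smul_of_eventuallyEq_zero {α 𝕜 E : Type*} [TopologicalSpace E]
    [T2Space E] [Zero E] [SMulZeroClass 𝕜 E] {l : Filter α} [l.NeBot] {f : α → E} {g : α → 𝕜}
    {v : E} (hf : f =ᶠ[l] 0) (h : Tendsto (fun x => g x • f x) l (𝓝 v)) : v = 0 :=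
  tendsto_nhds_unique h <| tendsto_const_nhds.congr' <| hf.mono fun x hx => by simp [hx]

section Cobounded

variable {𝕜 : Type*} [NormedField 𝕜]

theorem tendsto_inv_sub_cobounded (w : 𝕜) :
    Tendsto (fun z => (z - w)⁻¹) (cobounded 𝕜) (𝓝 0) :=
  tendsto_inv₀_cobounded.comp (tendsto_sub_const_cobounded w)

theorem tendsto_div_sub_cobounded (w : 𝕜) :
    Tendsto (fun z => z / (z - w)) (cobounded 𝕜) (𝓝 1) := by
  have lim := ((tendsto_inv_sub_cobounded w).const_mul w).const_add 1
  rw [mul_zero, add_zero] at lim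
  refine lim.congr' ?_
  filter_upwards [eventually_ne_cobounded w] with z hz
  field_simp [sub_ne_zero.mpr hz]
  ring

theorem tendsto_inv_sq_cobounded : Tendsto (fun z : 𝕜 => (z ^ 2)⁻¹) (cobounded 𝕜) (𝓝 0) := by
  simpa [inv_pow] using (tendsto_inv₀_cobounded (α := 𝕜)).pow 2

theorem tendsto_inv_sq_smul_quadratic {E : Type*} [NormedAddCommGroup E] [NormedSpace 𝕜 E]
    (a b c : E) :
    Tendsto (fun z : 𝕜 => (z ^ 2)⁻¹ • (z ^ 2 • a + z • b + c)) (cobounded 𝕜) (𝓝 a) := by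
  have lim := ((tendsto_const_nhds (x := a)).add (tendsto_inv₀_cobounded.smul_const b)).add
    (((tendsto_inv₀_cobounded (α := 𝕜)).pow 2).smul_const c)
  simp only [zero_smul, add_zero, ne_eq, OfNat.ofNat_ne_zero, not_false_eq_true, zero_pow] at lim
  refine lim.congr' ?_
  filter_upwards [eventually_ne_cobounded 0] with z hz
  match_scalars <;> field_simp

end Cobounded

section PolePart

variable (z₁ z₂ : ℂ) (M₁ M₂ M₃ M₄ : Fin 3 → ℂ)

theorem tendsto_polePart_cobounded :
    Tendsto (polePart z₁ z₂ M₁ M₂ M₃ M₄) (cobounded ℂ) (𝓝 0) := by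
  have h₁ := tendsto_inv_sub_cobounded z₁
  have h₂ := tendsto_inv_sub_cobounded z₂
  unfold polePart
  simpa [inv_pow] using ((((h₁.pow 2).smul_const M₁).add (h₁.smul_const M₂)).add
    ((h₂.pow 2).smul_const M₃)).add (h₂.smul_const M₄)

theorem tendsto_sq_smul_polePart (h : M₂ + M₄ = 0) :
    Tendsto (fun z => z ^ 2 • polePart z₁ z₂ M₁ M₂ M₃ M₄ z) (cobounded ℂ)
      (𝓝 (M₁ + z₁ • M₂ + M₃ + z₂ • M₄)) := by
  obtain rfl : M₄ = -M₂ := eq_neg_of_add_eq_zero_right h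
  have hu := tendsto_div_sub_cobounded z₁
  have hv := tendsto_div_sub_cobounded z₂
  have lim := (((hu.pow 2).smul_const M₁).add
    (((hu.mul hv).const_mul (z₁ - z₂)).smul_const M₂)).add
    ((hv.pow 2).smul_const M₃)
  convert lim.congr' ?_ using 2
  · module
  filter_upwards [eventually_ne_cobounded z₁, eventually_ne_cobounded z₂] with z h₁ h₂
  have := sub_ne_zero.mpr h₁
  have := sub_ne_zero.mpr h₂
  simp only [polePart]
  match_scalars
  all_goals field_simp
  ring

end PolePart

theorem W3_eq_of_ne {z₁ z₂ z : ℂ} (hz : z₁ ≠ z₂) (h₁ : z ≠ z₁) (h₂ : z ≠ z₂) :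
    W3 z₁ z₂ z = (((z - z₁) * (z - z₂)) ^ 2)⁻¹ • ![1, 1, 1] := by
  have := sub_ne_zero.mpr hz
  have := sub_ne_zero.mpr h₁
  have := sub_ne_zero.mpr h₂
  rw [W3]
  congr 1
  field_simp
  ring

theorem W3_ne_zero {z₁ z₂ z : ℂ} (hz : z₁ ≠ z₂) (h₁ : z ≠ z₁) (h₂ : z ≠ z₂) :
    W3 z₁ z₂ z ≠ 0 := by
  rw [W3_eq_of_ne hz h₁ h₂]
  refine smul_ne_zero (by simp [sub_ne_zero.mpr h₁, sub_ne_zero.mpr h₂]) fun h => ?_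
  simpa using congrFun h 0

theorem tendsto_W3_cobounded {z₁ z₂ : ℂ} (hz : z₁ ≠ z₂) :
    Tendsto (W3 z₁ z₂) (cobounded ℂ) (𝓝 0) := by
  have lim := ((tendsto_inv_sub_cobounded z₁).mul (tendsto_inv_sub_cobounded z₂)).pow 2
    |>.smul_const (![1, 1, 1] : Fin 3 → ℂ)
  simp only [mul_zero, ne_eq, OfNat.ofNat_ne_zero, not_false_eq_true, zero_pow, zero_smul] at lim
  refine lim.congr' ?_
  filter_upwards [eventually_ne_cobounded z₁, eventually_ne_cobounded z₂] with z h₁ h₂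
  rw [W3_eq_of_ne hz h₁ h₂, ← mul_inv, inv_pow]

theorem tendsto_sq_smul_W3_cobounded {z₁ z₂ : ℂ} (hz : z₁ ≠ z₂) :
    Tendsto (fun z => z ^ 2 • W3 z₁ z₂ z) (cobounded ℂ) (𝓝 0) := by
  have lim := ((tendsto_div_sub_cobounded z₁).mul (tendsto_inv_sub_cobounded z₂)).pow 2
    |>.smul_const (![1, 1, 1] : Fin 3 → ℂ)
  simp only [mul_zero, ne_eq, OfNat.ofNat_ne_zero, not_false_eq_true, zero_pow, zero_smul] at lim
  refine lim.congr' ?_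
  filter_upwards [eventually_ne_cobounded z₁, eventually_ne_cobounded z₂] with z h₁ h₂
  rw [W3_eq_of_ne hz h₁ h₂, smul_smul]
  congr 1
  field_simp

theorem W1_eq_polePart_add (z₁ z₂ z : ℂ) :
    W1 z₁ z₂ z = polePart z₁ z₂ (L1 z₁ z₂) (L2 z₁ z₂) (L3 z₁ z₂) (L4 z₁ z₂) z +
      (z ^ 2 • Gm2 + z • Gm1 z₁ z₂ + G0 z₁ z₂) := by
  simp only [W1, polePart, add_assoc]

theorem tendsto_inv_sq_smul_W1 (z₁ z₂ : ℂ) :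
    Tendsto (fun z => (z ^ 2)⁻¹ • W1 z₁ z₂ z) (cobounded ℂ) (𝓝 Gm2) := by
  simp only [W1_eq_polePart_add, smul_add]
  simpa using (tendsto_inv_sq_cobounded.smul (tendsto_polePart_cobounded _ _ _ _ _ _)).add
    (tendsto_inv_sq_smul_quadratic Gm2 (Gm1 z₁ z₂) (G0 z₁ z₂))

theorem linear_independence_of_solutions_general (z₁ z₂ : ℂ) (hz : z₁ ≠ z₂)
    (M₁ M₂ M₃ M₄ : Fin 3 → ℂ)
    (hM₁ : M₂ + M₄ = 0)
    (hM₂ : M₁ + z₁ • M₂ + M₃ + z₂ • M₄ = ![0, 1, -1])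
    (W2 : ℂ → Fin 3 → ℂ)
    (hW2def : ∀ z : ℂ, W2 z = polePart z₁ z₂ M₁ M₂ M₃ M₄ z)
    (α₁ α₂ α₃ : ℂ)
    (h : ∀ z : ℂ, z ≠ z₁ → z ≠ z₂ →
      α₁ • W1 z₁ z₂ z + α₂ • W2 z + α₃ • W3 z₁ z₂ z = 0) :
    α₁ = 0 ∧ α₂ = 0 ∧ α₃ = 0 := by
  obtain rfl : W2 = polePart z₁ z₂ M₁ M₂ M₃ M₄ := funext hW2def
  have hS : (fun z => α₁ • W1 z₁ z₂ z + α₂ • polePart z₁ z₂ M₁ M₂ M₃ M₄ z + α₃ • W3 z₁ z₂ z)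
      =ᶠ[cobounded ℂ] 0 := by
    filter_upwards [eventually_ne_cobounded z₁, eventually_ne_cobounded z₂] with z h₁ h₂
    exact h z h₁ h₂
  have hα₁ : α₁ = 0 := by
    have lim := (((tendsto_inv_sq_smul_W1 z₁ z₂).const_smul α₁).add
      ((tendsto_inv_sq_cobounded.smul (tendsto_polePart_cobounded z₁ z₂ M₁ M₂ M₃ M₄)).const_smul
        α₂)).add ((tendsto_inv_sq_cobounded.smul (tendsto_W3_cobounded hz)).const_smul α₃)
    have := eq_zero_of_tendsto_smul_of_eventuallyEq_zero (g := fun z => (z ^ 2)⁻¹) hS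
      (lim.congr fun z => by module)
    simpa [Gm2] using congrFun this 0
  subst hα₁
  have hα₂ : α₂ = 0 := by
    have lim := ((tendsto_sq_smul_polePart z₁ z₂ M₁ M₂ M₃ M₄ hM₁).const_smul α₂).add
      ((tendsto_sq_smul_W3_cobounded hz).const_smul α₃)
    rw [hM₂] at lim
    have := eq_zero_of_tendsto_smul_of_eventuallyEq_zero (g := fun z => z ^ 2) hS
      (lim.congr fun z => by module)
    simpa using congrFun this 1
  subst hα₂
  obtain ⟨z, hSz, h₁, h₂⟩ :=
    (hS.and ((eventually_ne_cobounded z₁).and (eventually_ne_cobounded z₂))).exists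
  simp only [zero_smul, zero_add, Pi.zero_apply] at hSz
  exact ⟨rfl, rfl, (smul_eq_zero.mp hSz).resolve_right (W3_ne_zero hz h₁ h₂)⟩

theorem linear_independence_of_solutions (z₁ z₂ : ℂ) (hz : z₁ ≠ z₂)
    (M₁ M₂ M₃ M₄ : Fin 3 → ℂ)
    (hM₁ : M₂ + M₄ = 0)
    (hM₂ : M₁ + z₁ • M₂ + M₃ + z₂ • M₄ = ![0, 1, -1])
    (W2 : ℂ → Fin 3 → ℂ)
    (hW2def : ∀ z : ℂ, W2 z = polePart z₁ z₂ M₁ M₂ M₃ M₄ z)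
    (hW2sol : ∀ z : ℂ, z ≠ z₁ → z ≠ z₂ →
      HasDerivAt W2 ((-2 : ℂ) • (A z₁ z₂ z *ᵥ W2 z)) z)
    (α₁ α₂ α₃ : ℂ)
    (h : ∀ z : ℂ, z ≠ z₁ → z ≠ z₂ →
      α₁ • W1 z₁ z₂ z + α₂ • W2 z + α₃ • W3 z₁ z₂ z = 0) :
    α₁ = 0 ∧ α₂ = 0 ∧ α₃ = 0 :=
  linear_independence_of_solutions_general z₁ z₂ hz M₁ M₂ M₃ M₄ hM₁ hM₂ W2 hW2def α₁ α₂ α₃ h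
end
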